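/- Let 1 ≤ k < n, S = {1,…,k}, S^c = {k+1,…,n}, and let g : {1,…,n} → {1,…,n} satisfy g(S) ⊆ S^c. Define r(g) : S^c → S^c by r(g)(x) = g(x) if g(x) ∈ S^c, and r(g)(x) = g(g(x)) if g(x) ∈ S. Then r(g) is well defined (takes values in S^c), and the number of cycles of r(g) equals the number of cycles c(g) of g. -/

import Mathlib

open scoped Classical

/-- The core of a self-map: the set of points lying on a cycle,
i.e. `x` with `f^[j] x = x` for some `j ≥ 1`. -/
def inCore {V : Type*} (f : V → V) (x : V) : Prop := ∃ j ≥ 1, f^[j] x = x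

/-- The number of cycles of a self-map: the number of distinct forward orbits
of points of the core (each cycle is the forward orbit of any of its points). -/
noncomputable def cycleCount {V : Type*} (f : V → V) : ℕ :=
  Set.ncard ((fun x => {y | ∃ j : ℕ, f^[j] x = y}) '' {x | inCore f x})

/-!
Every cycle of `g` meets `Sᶜ`, since `g` maps `S` into `Sᶜ`. On `Sᶜ` the map `r(g)` is the
first return map of `g`: an `r(g)`-step is one `g`-step, or two when the intermediate point lies
in `S`. Hence for `x, y ∈ Sᶜ`, `y` is reachable from `x` under `r(g)` iff it is under `g`. So
`x ∈ Sᶜ` is `r(g)`-periodic iff it is `g`-periodic, two points of `Sᶜ` have the same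
`r(g)`-orbit iff they have the same `g`-orbit, and `C ↦ C ∩ Sᶜ` is a bijection from the cycles
of `g` to those of `r(g)`.
-/

open Function

theorem Set.ncard_image_eq_ncard_image_of_forall_eq_iff {α β γ : Type*} {f : α → β}
    {h : α → γ} {s : Set α} (hfh : ∀ x ∈ s, ∀ y ∈ s, f x = f y ↔ h x = h y) :
    (f '' s).ncard = (h '' s).ncard := by
  have hfst : Set.InjOn Prod.fst ((fun x => (f x, h x)) '' s) := by
    rintro _ ⟨x, hx, rfl⟩ _ ⟨y, hy, rfl⟩ e
    exact Prod.ext e ((hfh x hx y hy).1 e)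
  have hsnd : Set.InjOn Prod.snd ((fun x => (f x, h x)) '' s) := by
    rintro _ ⟨x, hx, rfl⟩ _ ⟨y, hy, rfl⟩ e
    exact Prod.ext ((hfh x hx y hy).2 e) e
  calc (f '' s).ncard = (Prod.fst '' ((fun x => (f x, h x)) '' s)).ncard := by
        rw [Set.image_image]
    _ = (Prod.snd '' ((fun x => (f x, h x)) '' s)).ncard :=
        hfst.ncard_image.trans hsnd.ncard_image.symm
    _ = (h '' s).ncard := by rw [Set.image_image]

section Orbits

variable {V : Type*} (f : V → V)

def fwdOrbit (x : V) : Set V := Set.range fun j => f^[j] x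

theorem cycleCount_eq_ncard : cycleCount f = (fwdOrbit f '' {x | inCore f x}).ncard := rfl

variable {f}

theorem self_mem_fwdOrbit (x : V) : x ∈ fwdOrbit f x := ⟨0, rfl⟩

theorem apply_mem_fwdOrbit (x : V) : f x ∈ fwdOrbit f x := ⟨1, rfl⟩

theorem fwdOrbit_subset_of_mem {x y : V} (h : y ∈ fwdOrbit f x) :
    fwdOrbit f y ⊆ fwdOrbit f x := by
  obtain ⟨i, rfl⟩ := h
  rintro _ ⟨j, rfl⟩
  exact ⟨j + i, iterate_add_apply f j i x⟩

theorem fwdOrbit_eq_iff {x y : V} :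
    fwdOrbit f x = fwdOrbit f y ↔ x ∈ fwdOrbit f y ∧ y ∈ fwdOrbit f x :=
  ⟨fun h => ⟨h ▸ self_mem_fwdOrbit x, h ▸ self_mem_fwdOrbit y⟩,
    fun ⟨hx, hy⟩ => (fwdOrbit_subset_of_mem hx).antisymm (fwdOrbit_subset_of_mem hy)⟩

theorem mem_fwdOrbit_apply_iff {x y : V} (hyx : y ≠ x) :
    y ∈ fwdOrbit f (f x) ↔ y ∈ fwdOrbit f x := by
  constructor
  · rintro ⟨i, rfl⟩
    exact ⟨i + 1, iterate_succ_apply f i x⟩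
  · rintro ⟨_ | i, rfl⟩
    · exact absurd rfl hyx
    · exact ⟨i, (iterate_succ_apply f i x).symm⟩

theorem inCore_iff_mem_fwdOrbit_apply {x : V} : inCore f x ↔ x ∈ fwdOrbit f (f x) := by
  constructor
  · rintro ⟨_ | i, hi, hx⟩
    · omega
    · exact ⟨i, (iterate_succ_apply f i x).symm.trans hx⟩
  · rintro ⟨i, hx⟩
    exact ⟨i + 1, by omega, (iterate_succ_apply f i x).trans hx⟩

theorem inCore.apply {x : V} (hx : inCore f x) : inCore f (f x) := by
  obtain ⟨j, hj, hx⟩ := hx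
  exact ⟨j, hj, by rw [← iterate_succ_apply, iterate_succ_apply', hx]⟩

theorem inCore.fwdOrbit_apply {x : V} (hx : inCore f x) : fwdOrbit f (f x) = fwdOrbit f x :=
  fwdOrbit_eq_iff.2 ⟨apply_mem_fwdOrbit x, inCore_iff_mem_fwdOrbit_apply.1 hx⟩

end Orbits

section ReducedMap

variable {V : Type*} {P : V → Prop} (g : V → V) (hg : ∀ x, ¬P x → P (g x))

noncomputable def reducedMap (x : {x // P x}) : {x // P x} :=
  if h : P (g x) then ⟨g x, h⟩ else ⟨g (g x), hg _ h⟩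

variable {g}

theorem reducedMap_of_pos {x : {x // P x}} (h : P (g x)) : (reducedMap g hg x : V) = g x := by
  simp [reducedMap, h]

theorem reducedMap_of_neg {x : {x // P x}} (h : ¬P (g x)) : (reducedMap g hg x : V) = g (g x) := by
  simp [reducedMap, h]

theorem exists_reducedMap_iterate_eq (m : ℕ) (x : {x // P x}) :
    ∃ j, ((reducedMap g hg)^[m] x : V) = g^[j] x := by
  induction m with
  | zero => exact ⟨0, rfl⟩
  | succ m ih =>
    obtain ⟨j, hj⟩ := ih
    rw [iterate_succ_apply']
    by_cases h : P (g ((reducedMap g hg)^[m] x))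
    · exact ⟨j + 1, by rw [reducedMap_of_pos hg h, hj, iterate_succ_apply']⟩
    · refine ⟨j + 2, ?_⟩
      rw [reducedMap_of_neg hg h, hj, iterate_succ_apply', iterate_succ_apply']

theorem exists_reducedMap_iterate_eq_of_pos (x : {x // P x}) (j : ℕ) (hj : P (g^[j] x)) :
    ∃ m, ((reducedMap g hg)^[m] x : V) = g^[j] x := by
  induction j using Nat.twoStepInduction with
  | zero => exact ⟨0, rfl⟩
  | one => exact ⟨1, reducedMap_of_pos hg hj⟩
  | more j ih₀ ih₁ =>
    rw [iterate_succ_apply'] at hj ⊢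
    by_cases h : P (g^[j + 1] x)
    · obtain ⟨m, hm⟩ := ih₁ h
      refine ⟨m + 1, ?_⟩
      rw [iterate_succ_apply', reducedMap_of_pos hg (by rwa [hm]), hm]
    · have hj₀ : P (g^[j] x) := by
        by_contra h₀
        exact h (by rw [iterate_succ_apply']; exact hg _ h₀)
      obtain ⟨m, hm⟩ := ih₀ hj₀
      refine ⟨m + 1, ?_⟩
      rw [iterate_succ_apply', reducedMap_of_neg hg (by rwa [hm, ← iterate_succ_apply' g j]), hm,
        iterate_succ_apply']

theorem mem_fwdOrbit_reducedMap_iff {x y : {x // P x}} :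
    y ∈ fwdOrbit (reducedMap g hg) x ↔ (y : V) ∈ fwdOrbit g x := by
  constructor
  · rintro ⟨m, rfl⟩
    obtain ⟨j, hj⟩ := exists_reducedMap_iterate_eq hg m x
    exact ⟨j, hj.symm⟩
  · rintro ⟨j, hj : g^[j] x = y⟩
    obtain ⟨m, hm⟩ := exists_reducedMap_iterate_eq_of_pos hg x j (hj ▸ y.2)
    exact ⟨m, Subtype.ext (hm.trans hj)⟩

theorem fwdOrbit_reducedMap_eq_iff {x y : {x // P x}} :
    fwdOrbit (reducedMap g hg) x = fwdOrbit (reducedMap g hg) y ↔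
      fwdOrbit g x = fwdOrbit g y := by
  simp only [fwdOrbit_eq_iff, mem_fwdOrbit_reducedMap_iff]

theorem inCore_reducedMap_iff {x : {x // P x}} : inCore (reducedMap g hg) x ↔ inCore g x := by
  rw [inCore_iff_mem_fwdOrbit_apply, inCore_iff_mem_fwdOrbit_apply, mem_fwdOrbit_reducedMap_iff]
  by_cases h : P (g x)
  · rw [reducedMap_of_pos hg h]
  · rw [reducedMap_of_neg hg h]
    exact mem_fwdOrbit_apply_iff fun e => h (e ▸ x.2)

theorem image_fwdOrbit_inCore_reducedMap :
    (fun x : {x // P x} => fwdOrbit g x) '' {x | inCore (reducedMap g hg) x} =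
      fwdOrbit g '' {x | inCore g x} := by
  ext O
  constructor
  · rintro ⟨x, hx, rfl⟩
    exact ⟨x, (inCore_reducedMap_iff hg).1 hx, rfl⟩
  · rintro ⟨x, hx, rfl⟩
    by_cases h : P x
    · exact ⟨⟨x, h⟩, (inCore_reducedMap_iff hg).2 hx, rfl⟩
    · exact ⟨⟨g x, hg x h⟩, (inCore_reducedMap_iff hg).2 hx.apply, hx.fwdOrbit_apply⟩

theorem cycleCount_reducedMap : cycleCount (reducedMap g hg) = cycleCount g := by
  rw [cycleCount_eq_ncard, cycleCount_eq_ncard, ← image_fwdOrbit_inCore_reducedMap hg]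
  exact Set.ncard_image_eq_ncard_image_of_forall_eq_iff fun x _ y _ =>
    fwdOrbit_reducedMap_eq_iff hg

end ReducedMap

theorem reduced_map_cycle_count_general (n k : ℕ)
    (g : Fin n → Fin n) (hg : ∀ x : Fin n, (x : ℕ) < k → k ≤ (g x : ℕ)) :
    ∃ r : {x : Fin n // k ≤ (x : ℕ)} → {x : Fin n // k ≤ (x : ℕ)},
      (∀ x : {x : Fin n // k ≤ (x : ℕ)},
        (r x : Fin n) = if (g x.1 : ℕ) < k then g (g x.1) else g x.1) ∧
      cycleCount r = cycleCount g := by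
  have hg' : ∀ x : Fin n, ¬k ≤ (x : ℕ) → k ≤ (g x : ℕ) := fun x hx =>
    hg x (not_le.1 hx)
  refine ⟨reducedMap g hg', fun x => ?_, cycleCount_reducedMap hg'⟩
  by_cases h : (g x.1 : ℕ) < k
  · rw [if_pos h, reducedMap_of_neg hg' (not_le.2 h)]
  · rw [if_neg h, reducedMap_of_pos hg' (not_lt.1 h)]

theorem reduced_map_cycle_count (n k : ℕ) (hk : 1 ≤ k) (hkn : k < n)
    (g : Fin n → Fin n) (hg : ∀ x : Fin n, (x : ℕ) < k → k ≤ (g x : ℕ)) :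
    ∃ r : {x : Fin n // k ≤ (x : ℕ)} → {x : Fin n // k ≤ (x : ℕ)},
      (∀ x : {x : Fin n // k ≤ (x : ℕ)},
        (r x : Fin n) = if (g x.1 : ℕ) < k then g (g x.1) else g x.1) ∧
      cycleCount r = cycleCount g :=
  reduced_map_cycle_count_general n k g hg
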